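/- Let R be a commutative ring, n ≥ 1, m ≥ 1, and k integers with 1 ≤ k ≤ m, and let f, g ∈ R[X] with deg f < n+m−1 and deg g < n. Then the middle product splits as: ((f·g) quo X^{n−1}) mod X^m = ( ((f mod X^{n+k−1})·g) quo X^{n−1} ) mod X^k + X^k·( ( ((f quo X^k)·g) quo X^{n−1} ) mod X^{m−k} ). -/

import Mathlib

/-!
Coefficient `i < m` of the left side is `(f g)_{i+n-1}`. For `i < k` this index is below
`n + k - 1`, and low coefficients of a product only see the low coefficients of `f`. For
`k ≤ i` it is at least `k + n - 1`, above the degree of `(f mod X^k) g`, so writing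
`f = f mod X^k + X^k (f quo X^k)` leaves only the coefficient of `(f quo X^k) g` shifted by `k`.
-/

open Polynomial

namespace Polynomial

variable {R : Type*} [CommRing R]

theorem coeff_modByMonic_X_pow (p : R[X]) (t i : ℕ) :
    (p %ₘ X ^ t).coeff i = if i < t then p.coeff i else 0 := by
  nontriviality R
  have hdeg : (p %ₘ X ^ t).degree < t := by
    simpa using degree_modByMonic_lt p (monic_X_pow (R := R) t)
  split_ifs with hit
  · have h := congrArg (coeff · i) (modByMonic_add_div p (X ^ t))
    simpa [coeff_X_pow_mul', not_le.mpr hit] using h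
  · exact coeff_eq_zero_of_degree_lt (hdeg.trans_le (mod_cast not_lt.mp hit))

theorem coeff_divByMonic_X_pow (p : R[X]) (t i : ℕ) :
    (p /ₘ X ^ t).coeff i = p.coeff (i + t) := by
  have h := congrArg (coeff · (i + t)) (modByMonic_add_div p (X ^ t))
  simpa [coeff_X_pow_mul', coeff_modByMonic_X_pow] using h

theorem coeff_modByMonic_X_pow_mul {t i : ℕ} (hi : i < t) (f g : R[X]) :
    ((f %ₘ X ^ t) * g).coeff i = (f * g).coeff i := by
  simp only [coeff_mul]
  refine Finset.sum_congr rfl fun x hx => ?_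
  rw [coeff_modByMonic_X_pow, if_pos (by grind [Finset.HasAntidiagonal.mem_antidiagonal])]

theorem coeff_modByMonic_X_pow_mul_eq_zero {n k j : ℕ} (f : R[X]) {g : R[X]}
    (hg : g.degree < n) (hj : k + n ≤ j + 1) : ((f %ₘ X ^ k) * g).coeff j = 0 := by
  rw [coeff_mul]
  refine Finset.sum_eq_zero fun x hx => ?_
  rw [Finset.HasAntidiagonal.mem_antidiagonal] at hx
  by_cases hxk : x.1 < k
  · rw [coeff_eq_zero_of_degree_lt (hg.trans_le (mod_cast (by omega : n ≤ x.2))), mul_zero]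
  · rw [coeff_modByMonic_X_pow, if_neg hxk, zero_mul]

theorem coeff_divByMonic_X_pow_mul {n k i : ℕ} (f : R[X]) {g : R[X]}
    (hg : g.degree < n) (hi : n ≤ i + 1) :
    ((f /ₘ X ^ k) * g).coeff i = (f * g).coeff (i + k) := by
  conv_rhs => rw [← modByMonic_add_div f (X ^ k)]
  rw [add_mul, mul_assoc, coeff_add, coeff_X_pow_mul,
    coeff_modByMonic_X_pow_mul_eq_zero f hg (by omega), zero_add]

end Polynomial

theorem middle_product_split_general
    {R : Type*} [CommRing R] (n m k : ℕ) (hn : 1 ≤ n)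
    (hkm : k ≤ m)
    (f g : R[X]) (hg : g.degree < n) :
    ((f * g) /ₘ X ^ (n - 1)) %ₘ X ^ m =
      (((f %ₘ X ^ (n + k - 1)) * g) /ₘ X ^ (n - 1)) %ₘ X ^ k
        + X ^ k * ((((f /ₘ X ^ k) * g) /ₘ X ^ (n - 1)) %ₘ X ^ (m - k)) := by
  ext i
  simp only [coeff_add, coeff_X_pow_mul', coeff_modByMonic_X_pow, coeff_divByMonic_X_pow]
  rcases lt_or_ge i k with hik | hki
  · rw [if_pos (hik.trans_le hkm), if_pos hik, if_neg (by omega), add_zero,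
      coeff_modByMonic_X_pow_mul (by omega)]
  · rw [if_neg (by omega : ¬i < k), if_pos hki, zero_add]
    by_cases him : i < m
    · rw [if_pos him, if_pos (by omega), coeff_divByMonic_X_pow_mul f hg (by omega)]
      congr 1
      omega
    · rw [if_neg him, if_neg (by omega)]

/-- For a commutative ring `R`, integers `n, m ≥ 1` and `1 ≤ k ≤ m`, and
`f g : R[X]` with `deg f < n+m−1` and `deg g < n`, the middle product splits as
`MP(f,g) = MP(f mod X^{n+k−1}, g) + X^k · MP(f quo X^k, g)` where
`MP(f,g) = ((f·g) quo X^{n−1}) mod X^m`. -/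
theorem middle_product_split
    {R : Type*} [CommRing R] (n m k : ℕ) (hn : 1 ≤ n) (hm : 1 ≤ m)
    (hk1 : 1 ≤ k) (hkm : k ≤ m)
    (f g : R[X]) (hf : f.degree < ((n + m - 1 : ℕ) : WithBot ℕ)) (hg : g.degree < n) :
    ((f * g) /ₘ X ^ (n - 1)) %ₘ X ^ m =
      (((f %ₘ X ^ (n + k - 1)) * g) /ₘ X ^ (n - 1)) %ₘ X ^ k
        + X ^ k * ((((f /ₘ X ^ k) * g) /ₘ X ^ (n - 1)) %ₘ X ^ (m - k)) :=
  middle_product_split_general n m k hn hkm f g hg
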